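/- Let H be a connected, bipartite, undecomposable graph whose complement is not a circular-arc graph, let (α,β,γ) be a structural triple of H, and let g ∈ ℕ. Then there exists a path T of even length with H-lists L, with endvertices p (the input) and r (the output) and an internal vertex q lying in the same bipartition class of T as p and r, such that: (S1) L(p) = L(r) = {α,β} and L(q) = {α,β,γ}; (S2) for every a ∈ {α,β} there exists a list homomorphism φ : (T,L) → H with φ(p) = φ(r) = a and φ(q) ≠ γ; (S3) there exists a list homomorphism φ : (T,L) → H with φ(p) = α, φ(r) = β, and φ(q) = γ; (S4) for every list homomorphism φ : (T,L) → H, if φ(p) = α and φ(r) = β then φ(q) = γ. Moreover, dist(p,q) ≥ g/2 and dist(r,q) ≥ g/2. -/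

import Mathlib

open SimpleGraph

/-- A list homomorphism from `G` to the graph given by the symmetric relation `H`,
respecting the lists `L`. -/
def ListHomRel {U W : Type} (G : SimpleGraph U) (H : W → W → Prop)
    (L : U → Set W) (φ : U → W) : Prop :=
  (∀ v, φ v ∈ L v) ∧ ∀ ⦃u v : U⦄, G.Adj u v → H (φ u) (φ v)


/-- `X` is a bipartition class of `H`. -/
def BipClass {W : Type} (H : SimpleGraph W) (X : Set W) : Prop :=
  ∀ ⦃u v : W⦄, H.Adj u v → (u ∈ X ↔ v ∉ X)

/-- Two vertices are incomparable: neither neighbourhood contains the other. -/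
def IncompPair {W : Type} (H : SimpleGraph W) (u v : W) : Prop :=
  ¬ H.neighborSet u ⊆ H.neighborSet v ∧ ¬ H.neighborSet v ⊆ H.neighborSet u

/-- A set is incomparable if its vertices are pairwise incomparable. -/
def IncompSet {W : Type} (H : SimpleGraph W) (S : Set W) : Prop :=
  ∀ u ∈ S, ∀ v ∈ S, u ≠ v → IncompPair H u v

/-- A set is strongly incomparable if every vertex has a private neighbor. -/
def StrongIncompSet {W : Type} (H : SimpleGraph W) (S : Set W) : Prop :=
  ∀ u ∈ S, ∃ u', H.Adj u u' ∧ ∀ w ∈ S, w ≠ u → ¬ H.Adj w u'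

/-- Walk `P` avoids walk `Q` (for walks of equal length starting in one bipartition
class): their starting vertices differ and `p_i q_{i+1}` is never an edge. -/
def Avoids {W : Type} (H : SimpleGraph W) {a b c d : W}
    (P : H.Walk a b) (Q : H.Walk c d) : Prop :=
  a ≠ c ∧ ∀ i, i < P.length → ¬ H.Adj (P.getVert i) (Q.getVert (i + 1))

/-- `w` lists the consecutive vertices of an induced cycle of length `m` in `H`. -/
def IsInducedCycleOn {W : Type} (H : SimpleGraph W) {m : ℕ} (w : Fin m → W) : Prop :=
  Function.Injective w ∧
    ∀ i j : Fin m, H.Adj (w i) (w j) ↔ ((j : ℕ) = ((i : ℕ) + 1) % m ∨ (i : ℕ) = ((j : ℕ) + 1) % m)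

/-- A structural triple `(α,β,γ)` of a bipartite graph `H`: (1) there are `α',β'` such that
the edges `αα'`, `ββ'` induce a matching; (2) `α,β,γ` are pairwise incomparable; (3) there
are walks `P,P' : α→β` and `Q,Q' : β→α` of matching lengths with `P` avoiding `Q` and `Q'`
avoiding `P'`; (4) either an induced `C₆` or `C₈` through `α,β,γ` as prescribed exists, or
`{α,β,γ}` is strongly incomparable and suitable mutually avoiding walks exist for every
permutation of `(α,β,γ)`. -/
def StructTriple {W : Type} (H : SimpleGraph W) (α β γ : W) : Prop :=
  (∃ α' β' : W, H.Adj α α' ∧ H.Adj β β' ∧ α ≠ β ∧ α' ≠ β' ∧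
     ¬ H.Adj α β ∧ ¬ H.Adj α' β' ∧ ¬ H.Adj α β' ∧ ¬ H.Adj β α') ∧
  (IncompPair H α β ∧ IncompPair H α γ ∧ IncompPair H β γ) ∧
  (∃ (P : H.Walk α β) (P' : H.Walk α β) (Q : H.Walk β α) (Q' : H.Walk β α),
     P.length = Q.length ∧ P'.length = Q'.length ∧ Avoids H P Q ∧ Avoids H Q' P') ∧
  ((∃ w : Fin 6 → W, IsInducedCycleOn H w ∧ α = w 0 ∧ β = w 4 ∧ γ = w 2) ∨
   (∃ w : Fin 8 → W, IsInducedCycleOn H w ∧ α = w 0 ∧ β = w 4 ∧ γ = w 2) ∨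
   (StrongIncompSet H {α, β, γ} ∧
     ∀ a b c : W, ({a, b, c} : Set W) = {α, β, γ} →
       ∃ (Xc : H.Walk α a) (Yc : H.Walk α b) (Zc : H.Walk β c),
         Xc.length = Zc.length ∧ Yc.length = Zc.length ∧
         Avoids H Xc Zc ∧ Avoids H Yc Zc ∧ Avoids H Zc Xc ∧ Avoids H Zc Yc))

/-- An arc of the circle (modelled as `AddCircle 1`): the image of a closed interval. -/
def IsCircArc (A : Set (AddCircle (1 : ℝ))) : Prop :=
  ∃ s ℓ : ℝ, 0 ≤ ℓ ∧ A = (fun t : ℝ => ((s + t : ℝ) : AddCircle (1 : ℝ))) '' Set.Icc 0 ℓ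

/-- A circular-arc graph: vertices can be assigned arcs of a circle so that two distinct
vertices are adjacent iff their arcs intersect. -/
def IsCircularArcGraph {W : Type} (G : SimpleGraph W) : Prop :=
  ∃ a : W → Set (AddCircle (1 : ℝ)),
    (∀ v, IsCircArc (a v)) ∧ ∀ u v : W, u ≠ v → (G.Adj u v ↔ (a u ∩ a v).Nonempty)

/-- In the bipartite graph `H` with bipartition class `X`, the set `S` induces a
biclique: all cross pairs are adjacent. -/
def InducesBiclique {W : Type} (H : SimpleGraph W) (X S : Set W) : Prop :=
  ∀ u ∈ S ∩ X, ∀ v ∈ S \ X, H.Adj u v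

/-- A bipartite decomposition `(D,N,R)` of the bipartite graph `H` with class `X`:
`(D,N,R)` partitions the vertices, `N` is non-empty and separates `D` from `R`,
`D` contains two vertices of one class, `N` induces a biclique, and
`(D∩X)∪(N\X)` and `(D\X)∪(N∩X)` induce bicliques. -/
def BipDecomp {W : Type} (H : SimpleGraph W) (X : Set W) (D N R : Set W) : Prop :=
  N.Nonempty ∧ D ∪ N ∪ R = Set.univ ∧
  Disjoint D N ∧ Disjoint D R ∧ Disjoint N R ∧
  (∀ d ∈ D, ∀ r ∈ R, ∀ p : H.Walk d r, ∃ v ∈ N, v ∈ p.support) ∧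
  (2 ≤ (D ∩ X).ncard ∨ 2 ≤ (D \ X).ncard) ∧
  InducesBiclique H X N ∧
  InducesBiclique H X ((D ∩ X) ∪ (N \ X)) ∧
  InducesBiclique H X ((D \ X) ∪ (N ∩ X))

/-- `H` is undecomposable: it admits no bipartite decomposition. -/
def Undecomposable {W : Type} (H : SimpleGraph W) (X : Set W) : Prop :=
  ¬ ∃ D N R : Set W, BipDecomp H X D N R

/-!
The gadget is a path carrying three list homomorphisms `A : α ⇝ α`, `B : β ⇝ β` and
`C : α ⇝ β`, where `C` passes through `γ` at `q`, and the list of the `i`-th vertex is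
`{A i, B i, C i}`. Left of `q` the tracks `A` and `C` avoid `B`, so a homomorphism starting at
`α` can never jump onto `B` and reaches `q` in `α` or `γ`. Right of `q`, read from the output
end, `B` and `C` avoid `A`, so a homomorphism ending in `β` is at `β` or `γ` at `q`. Hence
`α ↦ β` forces `γ` at `q`, while `A`, `B`, `C` themselves give (S2) and (S3).

The left tracks come from condition (4) for the permutation `(α, γ, β)` (or are read off the
induced `C₆`/`C₈`), the right ones from `(β, γ, α)` prefixed by the walks of condition (3).
Oscillating along the matching edges `αα'`, `ββ'` pads both sides to make `q` far from the ends;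
bipartiteness makes all lengths even.
-/

section SwitchingGadget

variable {W : Type} {H : SimpleGraph W}

lemma IncompPair.ne {u v : W} (h : IncompPair H u v) : u ≠ v := by
  rintro rfl
  exact h.1 subset_rfl

lemma BipClass.even_length {X : Set W} (hX : BipClass H X) {u v : W} (p : H.Walk u v)
    (hu : u ∈ X) (hv : v ∈ X) : Even p.length := by
  classical
  let c : H.Coloring Bool := Coloring.mk (fun w => decide (w ∈ X)) fun h => by
    have := hX h
    simp only [ne_eq, decide_eq_decide]
    tauto
  exact (c.even_length_iff_congr p).2 (by simp [c, Coloring.mk, hu, hv])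

lemma Avoids.cons {a a' b c c' d : W} {P : H.Walk a' b} {Q : H.Walk c' d} (ha : H.Adj a a')
    (hc : H.Adj c c') (hac : a ≠ c) (hac' : ¬ H.Adj a c') (h : Avoids H P Q) :
    Avoids H (Walk.cons ha P) (Walk.cons hc Q) := by
  refine ⟨hac, fun i hi => ?_⟩
  cases i with
  | zero => simpa using hac'
  | succ i => simpa using h.2 i (by simpa using hi)

lemma Avoids.append {a b c d e f : W} {P₁ : H.Walk a b} {Q₁ : H.Walk c d} {P₂ : H.Walk b e}
    {Q₂ : H.Walk d f} (h₁ : Avoids H P₁ Q₁) (h₂ : Avoids H P₂ Q₂) (hlen : P₁.length = Q₁.length) :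
    Avoids H (P₁.append P₂) (Q₁.append Q₂) := by
  refine ⟨h₁.1, fun i hi => ?_⟩
  rw [Walk.length_append] at hi
  by_cases hiP : i < P₁.length
  · rw [Walk.getVert_append, if_pos hiP, Walk.getVert_append', if_pos (by omega)]
    exact h₁.2 i hiP
  · rw [Walk.getVert_append, if_neg hiP, Walk.getVert_append, if_neg (by omega),
      ← hlen, show i + 1 - P₁.length = i - P₁.length + 1 by omega]
    exact h₂.2 _ (by omega)

def HasAvoidingWalks (H : SimpleGraph W) (ℓ : ℕ) (α β a b c : W) : Prop :=
  ∃ (X : H.Walk α a) (Y : H.Walk α b) (Z : H.Walk β c),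
    X.length = ℓ ∧ Y.length = ℓ ∧ Z.length = ℓ ∧ Avoids H X Z ∧ Avoids H Y Z

lemma HasAvoidingWalks.append {ℓ₁ ℓ₂ : ℕ} {α β u v a b c : W}
    (h₁ : HasAvoidingWalks H ℓ₁ α β u u v) (h₂ : HasAvoidingWalks H ℓ₂ u v a b c) :
    HasAvoidingWalks H (ℓ₁ + ℓ₂) α β a b c := by
  obtain ⟨X₁, Y₁, Z₁, hX₁, hY₁, hZ₁, hXZ₁, hYZ₁⟩ := h₁
  obtain ⟨X₂, Y₂, Z₂, hX₂, hY₂, hZ₂, hXZ₂, hYZ₂⟩ := h₂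
  exact ⟨X₁.append X₂, Y₁.append Y₂, Z₁.append Z₂, by simp [*], by simp [*], by simp [*],
    hXZ₁.append hXZ₂ (by omega), hYZ₁.append hYZ₂ (by omega)⟩

lemma HasAvoidingWalks.even {X : Set W} (hX : BipClass H X) {ℓ : ℕ} {α β a b c : W}
    (h : HasAvoidingWalks H ℓ α β a b c) (hα : α ∈ X) (ha : a ∈ X) : Even ℓ := by
  obtain ⟨P, -, -, rfl, -⟩ := h
  exact hX.even_length P hα ha

lemma hasAvoidingWalks_oscillate {α α' β β' : W} (hα : H.Adj α α') (hβ : H.Adj β β')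
    (hαβ : α ≠ β) (hαβ' : ¬ H.Adj α β') (hα'β : ¬ H.Adj α' β) (k : ℕ) :
    HasAvoidingWalks H (2 * k) α β α α β := by
  induction k with
  | zero => exact ⟨.nil, .nil, .nil, rfl, rfl, rfl, ⟨hαβ, by simp⟩, ⟨hαβ, by simp⟩⟩
  | succ k ih =>
    obtain ⟨X, -, Z, hX, -, hZ, hXZ, -⟩ := ih
    have hα'β' : α' ≠ β' := by
      rintro rfl
      exact hαβ' hα
    have hstep : Avoids H (.cons hα (.cons hα.symm X)) (.cons hβ (.cons hβ.symm Z)) :=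
      (hXZ.cons hα.symm hβ.symm hα'β' hα'β).cons hα hβ hαβ hαβ'
    exact ⟨_, _, _, by simp [hX]; ring, by simp [hX]; ring, by simp [hZ]; ring, hstep, hstep⟩

lemma IsInducedCycleOn.hasAvoidingWalks_six {w : Fin 6 → W} (hw : IsInducedCycleOn H w) :
    HasAvoidingWalks H 2 (w 0) (w 4) (w 0) (w 2) (w 4) ∧
      HasAvoidingWalks H 4 (w 0) (w 4) (w 4) (w 2) (w 0) := by
  have e (i j : Fin 6) (h : (j : ℕ) = (i + 1) % 6 ∨ (i : ℕ) = (j + 1) % 6 := by decide) :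
      H.Adj (w i) (w j) := (hw.2 i j).2 h
  have h04 : w 0 ≠ w 4 := hw.1.ne (by decide)
  refine ⟨⟨.cons (e 0 1) (.cons (e 1 0) .nil), .cons (e 0 1) (.cons (e 1 2) .nil),
      .cons (e 4 3) (.cons (e 3 4) .nil), rfl, rfl, rfl, ⟨h04, ?_⟩, ⟨h04, ?_⟩⟩,
    ⟨.cons (e 0 1) (.cons (e 1 2) (.cons (e 2 3) (.cons (e 3 4) .nil))),
      .cons (e 0 1) (.cons (e 1 2) (.cons (e 2 3) (.cons (e 3 2) .nil))),
      .cons (e 4 3) (.cons (e 3 4) (.cons (e 4 5) (.cons (e 5 0) .nil))),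
      rfl, rfl, rfl, ⟨h04, ?_⟩, ⟨h04, ?_⟩⟩⟩ <;>
  · intro i hi
    simp only [Walk.length_cons, Walk.length_nil] at hi
    interval_cases i <;> simp [hw.2]

lemma IsInducedCycleOn.hasAvoidingWalks_eight {w : Fin 8 → W} (hw : IsInducedCycleOn H w) :
    HasAvoidingWalks H 2 (w 0) (w 4) (w 0) (w 2) (w 4) ∧
      HasAvoidingWalks H 4 (w 0) (w 4) (w 4) (w 2) (w 0) := by
  have e (i j : Fin 8) (h : (j : ℕ) = (i + 1) % 8 ∨ (i : ℕ) = (j + 1) % 8 := by decide) :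
      H.Adj (w i) (w j) := (hw.2 i j).2 h
  have h04 : w 0 ≠ w 4 := hw.1.ne (by decide)
  refine ⟨⟨.cons (e 0 1) (.cons (e 1 0) .nil), .cons (e 0 1) (.cons (e 1 2) .nil),
      .cons (e 4 3) (.cons (e 3 4) .nil), rfl, rfl, rfl, ⟨h04, ?_⟩, ⟨h04, ?_⟩⟩,
    ⟨.cons (e 0 1) (.cons (e 1 2) (.cons (e 2 3) (.cons (e 3 4) .nil))),
      .cons (e 0 1) (.cons (e 1 2) (.cons (e 2 3) (.cons (e 3 2) .nil))),
      .cons (e 4 5) (.cons (e 5 6) (.cons (e 6 7) (.cons (e 7 0) .nil))),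
      rfl, rfl, rfl, ⟨h04, ?_⟩, ⟨h04, ?_⟩⟩⟩ <;>
  · intro i hi
    simp only [Walk.length_cons, Walk.length_nil] at hi
    interval_cases i <;> simp [hw.2]

lemma StructTriple.hasAvoidingWalks {α β γ : W} (h : StructTriple H α β γ) :
    (∃ ℓ, HasAvoidingWalks H ℓ α β α γ β) ∧ ∃ ℓ, HasAvoidingWalks H ℓ α β β γ α := by
  rcases h.2.2.2 with ⟨w, hw, rfl, rfl, rfl⟩ | ⟨w, hw, rfl, rfl, rfl⟩ | ⟨-, hwalks⟩
  · exact ⟨⟨_, hw.hasAvoidingWalks_six.1⟩, ⟨_, hw.hasAvoidingWalks_six.2⟩⟩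
  · exact ⟨⟨_, hw.hasAvoidingWalks_eight.1⟩, ⟨_, hw.hasAvoidingWalks_eight.2⟩⟩
  · obtain ⟨X₁, Y₁, Z₁, hX₁, hY₁, hXZ₁, hYZ₁, -⟩ := hwalks α γ β (by rw [Set.pair_comm])
    obtain ⟨X₂, Y₂, Z₂, hX₂, hY₂, hXZ₂, hYZ₂, -⟩ := hwalks β γ α (by grind)
    exact ⟨⟨_, X₁, Y₁, Z₁, hX₁, hY₁, rfl, hXZ₁, hYZ₁⟩, ⟨_, X₂, Y₂, Z₂, hX₂, hY₂, rfl, hXZ₂, hYZ₂⟩⟩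

lemma Avoids.forced {ℓ : ℕ} {α β a b c : W} {X : H.Walk α a} {Y : H.Walk α b} {Z : H.Walk β c}
    (hXZ : Avoids H X Z) (hYZ : Avoids H Y Z) (hX : X.length = ℓ) (hY : Y.length = ℓ)
    (ψ : ℕ → W) (hψ : ∀ i ≤ ℓ, ψ i ∈ ({X.getVert i, Y.getVert i, Z.getVert i} : Set W))
    (hadj : ∀ i < ℓ, H.Adj (ψ i) (ψ (i + 1))) (h0 : ψ 0 = α) :
    ∀ i ≤ ℓ, ψ i = X.getVert i ∨ ψ i = Y.getVert i := by
  intro i hi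
  induction i with
  | zero => simp [h0]
  | succ i ih =>
    rcases hψ (i + 1) hi with h | h | h
    · exact .inl h
    · exact .inr h
    · have hstep := hadj i (by omega)
      rw [Set.mem_singleton_iff.1 h] at hstep
      rcases ih (by omega) with h' | h' <;> rw [h'] at hstep
      · exact (hXZ.2 i (by omega) hstep).elim
      · exact (hYZ.2 i (by omega) hstep).elim

lemma SimpleGraph.Walk.getVert_append_of_le {u v w : W} (p : H.Walk u v) (q : H.Walk v w)
    {i : ℕ} (hi : i ≤ p.length) : (p.append q).getVert i = p.getVert i := by
  rw [Walk.getVert_append', if_pos hi]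

lemma SimpleGraph.Walk.getVert_append_reverse {ℓ ℓ' : ℕ} {u v w : W} (p : H.Walk u v)
    (q : H.Walk w v) (hp : p.length = ℓ) (hq : q.length = ℓ') {i : ℕ} (hi : i ≤ ℓ') :
    (p.append q.reverse).getVert (ℓ + ℓ' - i) = q.getVert i := by
  subst hp hq
  rw [Walk.getVert_append']
  split_ifs with h
  · obtain rfl : i = q.length := by omega
    simp
  · rw [Walk.getVert_reverse]
    congr 1
    omega

lemma switching_forced {ℓ ℓ' : ℕ} {α β γ : W} {X : H.Walk α α} {Y : H.Walk α γ}
    {Z : H.Walk β β} {X' : H.Walk β β} {Y' : H.Walk β γ} {Z' : H.Walk α α}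
    (hαβ : α ≠ β) (hXZ : Avoids H X Z) (hYZ : Avoids H Y Z) (hX : X.length = ℓ)
    (hY : Y.length = ℓ) (hZ : Z.length = ℓ) (hXZ' : Avoids H X' Z') (hYZ' : Avoids H Y' Z')
    (hX' : X'.length = ℓ') (hY' : Y'.length = ℓ') (hZ' : Z'.length = ℓ') (ψ : ℕ → W)
    (hψ : ∀ i ≤ ℓ + ℓ', ψ i ∈ ({(X.append Z'.reverse).getVert i,
      (Z.append X'.reverse).getVert i, (Y.append Y'.reverse).getVert i} : Set W))
    (hadj : ∀ i < ℓ + ℓ', H.Adj (ψ i) (ψ (i + 1)))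
    (h0 : ψ 0 = α) (hN : ψ (ℓ + ℓ') = β) : ψ ℓ = γ := by
  have hleft := hXZ.forced hYZ hX hY ψ (fun i hi => by
      have := hψ i (by omega)
      rw [Walk.getVert_append_of_le _ _ (by omega), Walk.getVert_append_of_le _ _ (by omega),
        Walk.getVert_append_of_le _ _ (by omega)] at this
      simp only [Set.mem_insert_iff, Set.mem_singleton_iff] at this ⊢
      tauto) (fun i hi => hadj i (by omega)) h0 ℓ le_rfl
  have hright := hXZ'.forced hYZ' hX' hY' (fun j => ψ (ℓ + ℓ' - j))
    (fun j hj => by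
      have := hψ (ℓ + ℓ' - j) (by omega)
      rw [Walk.getVert_append_reverse _ _ hX hZ' hj, Walk.getVert_append_reverse _ _ hZ hX' hj,
        Walk.getVert_append_reverse _ _ hY hY' hj] at this
      simp only [Set.mem_insert_iff, Set.mem_singleton_iff] at this ⊢
      tauto)
    (fun j hj => by
      have := hadj (ℓ + ℓ' - (j + 1)) (by omega)
      rwa [show ℓ + ℓ' - (j + 1) + 1 = ℓ + ℓ' - j by omega, H.adj_comm] at this)
    (by simpa using hN) ℓ' le_rfl
  rw [← hX, Walk.getVert_length, hX, ← hY, Walk.getVert_length] at hleft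
  rw [← hX', Walk.getVert_length, hX', ← hY', Walk.getVert_length, Nat.add_sub_cancel] at hright
  grind

lemma SimpleGraph.Walk.val_le_val_add_length_of_pathGraph {m : ℕ} {u v : Fin m}
    (p : (pathGraph m).Walk u v) : (v : ℕ) ≤ u + p.length := by
  induction p with
  | nil => simp
  | cons h p ih =>
    rw [pathGraph_adj] at h
    simp only [Walk.length_cons]
    omega

lemma le_add_dist_pathGraph {m : ℕ} (u v : Fin m) : (v : ℕ) ≤ u + (pathGraph m).dist u v := by
  obtain ⟨p, hp⟩ := (pathGraph_preconnected m u v).exists_walk_length_eq_dist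
  exact hp ▸ p.val_le_val_add_length_of_pathGraph

lemma listHomRel_pathGraph_getVert {N : ℕ} {u v : W} (A : H.Walk u v) (hA : A.length = N)
    {L : Fin (N + 1) → Set W} (hL : ∀ i : Fin (N + 1), A.getVert i ∈ L i) :
    ListHomRel (pathGraph (N + 1)) H.Adj L (fun i => A.getVert i) := by
  refine ⟨hL, fun i j hij => ?_⟩
  have := i.isLt
  have := j.isLt
  show H.Adj (A.getVert i) (A.getVert j)
  rcases pathGraph_adj.1 hij with h | h
  · rw [← h]
    exact A.adj_getVert_succ (by omega)
  · rw [← h]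
    exact (A.adj_getVert_succ (by omega)).symm

lemma ListHomRel.adj_pathGraph {N : ℕ} {L : Fin (N + 1) → Set W} {φ : Fin (N + 1) → W}
    (h : ListHomRel (pathGraph (N + 1)) H.Adj L φ) {i : ℕ} (hi : i < N) :
    H.Adj (φ (Fin.ofNat _ i)) (φ (Fin.ofNat _ (i + 1))) :=
  h.2 (pathGraph_adj.2 (.inl (by simp [Nat.mod_eq_of_lt, hi, Nat.lt_succ_of_lt hi])))

theorem exists_switching_path {ℓ ℓ' m : ℕ} {α β γ : W}
    (hl : HasAvoidingWalks H ℓ α β α γ β) (hr : HasAvoidingWalks H ℓ' β α β γ α)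
    (hαγ : α ≠ γ) (hβγ : β ≠ γ) (hℓ : Even ℓ) (hℓ' : Even ℓ') (hℓ0 : 0 < ℓ) (hℓ'0 : 0 < ℓ')
    (hm : m ≤ ℓ) (hm' : m ≤ ℓ') :
    ∃ (n : ℕ) (q : Fin (2 * n + 1)) (L : Fin (2 * n + 1) → Set W),
      (q : ℕ) % 2 = 0 ∧ q ≠ 0 ∧ q ≠ Fin.last (2 * n) ∧
      L 0 = {α, β} ∧ L (Fin.last (2 * n)) = {α, β} ∧ L q = {α, β, γ} ∧
      (∀ a ∈ ({α, β} : Set W),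
        ∃ φ, ListHomRel (pathGraph (2 * n + 1)) H.Adj L φ ∧
          φ 0 = a ∧ φ (Fin.last (2 * n)) = a ∧ φ q ≠ γ) ∧
      (∃ φ, ListHomRel (pathGraph (2 * n + 1)) H.Adj L φ ∧
        φ 0 = α ∧ φ (Fin.last (2 * n)) = β ∧ φ q = γ) ∧
      (∀ φ, ListHomRel (pathGraph (2 * n + 1)) H.Adj L φ →
        φ 0 = α → φ (Fin.last (2 * n)) = β → φ q = γ) ∧
      m ≤ (pathGraph (2 * n + 1)).dist 0 q ∧
      m ≤ (pathGraph (2 * n + 1)).dist (Fin.last (2 * n)) q := by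
  obtain ⟨X, Y, Z, hX, hY, hZ, hXZ, hYZ⟩ := hl
  obtain ⟨X', Y', Z', hX', hY', hZ', hXZ', hYZ'⟩ := hr
  obtain ⟨n, hn⟩ := (hℓ.add hℓ').two_dvd
  set A := X.append Z'.reverse
  set B := Z.append X'.reverse
  set C := Y.append Y'.reverse
  have hA : A.length = 2 * n := by simp [A, hX, hZ', hn]
  have hB : B.length = 2 * n := by simp [B, hZ, hX', hn]
  have hC : C.length = 2 * n := by simp [C, hY, hY', hn]
  let L : Fin (2 * n + 1) → Set W := fun i => {A.getVert i, B.getVert i, C.getVert i}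
  have hq : ℓ < 2 * n + 1 := by omega
  have hAq : A.getVert ℓ = α := by simp [A, Walk.getVert_append, hX]
  have hBq : B.getVert ℓ = β := by simp [B, Walk.getVert_append, hZ]
  have hCq : C.getVert ℓ = γ := by simp [C, Walk.getVert_append, hY]
  refine ⟨n, ⟨ℓ, hq⟩, L, Nat.even_iff.1 hℓ, Fin.ne_of_val_ne hℓ0.ne',
    Fin.ne_of_val_ne (by simp; omega), by simp [L, Set.pair_comm],
    by simp [L, Walk.getVert_of_length_le, hA, hB, hC], by simp [L, hAq, hBq, hCq], ?_, ?_, ?_,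
    ?_, ?_⟩
  · rintro a (rfl | rfl)
    · exact ⟨_, listHomRel_pathGraph_getVert A hA fun i => .inl rfl, by simp,
        A.getVert_of_length_le (by simp [hA]), hAq.trans_ne hαγ⟩
    · exact ⟨_, listHomRel_pathGraph_getVert B hB fun i => .inr (.inl rfl), by simp,
        B.getVert_of_length_le (by simp [hB]), hBq.trans_ne hβγ⟩
  · exact ⟨_, listHomRel_pathGraph_getVert C hC fun i => .inr (.inr rfl), by simp,
      C.getVert_of_length_le (by simp [hC]), hCq⟩
  · intro φ hφ h0 hN
    have hval (i : ℕ) (hi : i < 2 * n + 1) : Fin.ofNat _ i = (⟨i, hi⟩ : Fin (2 * n + 1)) :=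
      Fin.ext (by simp [Nat.mod_eq_of_lt hi])
    rw [← hval]
    refine switching_forced hXZ.1 hXZ hYZ hX hY hZ hXZ' hYZ' hX' hY' hZ'
      (fun i => φ (Fin.ofNat _ i)) (fun i hi => by rw [hval i (by omega)]; exact hφ.1 ⟨i, by omega⟩)
      (fun i hi => hφ.adj_pathGraph (by omega)) (by simpa using h0) ?_
    rwa [hval _ (by omega), show (⟨ℓ + ℓ', _⟩ : Fin (2 * n + 1)) = Fin.last _ from Fin.ext hn]
  · exact hm.trans (by simpa using le_add_dist_pathGraph 0 ⟨ℓ, hq⟩)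
  · have := le_add_dist_pathGraph ⟨ℓ, hq⟩ (Fin.last (2 * n))
    rw [SimpleGraph.dist_comm] at this
    simp only [Fin.val_last] at this
    omega

end SwitchingGadget

theorem switching_gadget_general {W : Type} (H : SimpleGraph W) (X : Set W)
    (hbip : BipClass H X)
    (α β γ : W) (hα : α ∈ X) (hβ : β ∈ X)
    (htriple : StructTriple H α β γ) (g : ℕ) :
    ∃ (n : ℕ) (q : Fin (2 * n + 1)) (L : Fin (2 * n + 1) → Set W),
      (q : ℕ) % 2 = 0 ∧ q ≠ 0 ∧ q ≠ Fin.last (2 * n) ∧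
      L 0 = {α, β} ∧ L (Fin.last (2 * n)) = {α, β} ∧ L q = {α, β, γ} ∧
      (∀ a ∈ ({α, β} : Set W),
        ∃ φ, ListHomRel (SimpleGraph.pathGraph (2 * n + 1)) H.Adj L φ ∧
          φ 0 = a ∧ φ (Fin.last (2 * n)) = a ∧ φ q ≠ γ) ∧
      (∃ φ, ListHomRel (SimpleGraph.pathGraph (2 * n + 1)) H.Adj L φ ∧
        φ 0 = α ∧ φ (Fin.last (2 * n)) = β ∧ φ q = γ) ∧
      (∀ φ, ListHomRel (SimpleGraph.pathGraph (2 * n + 1)) H.Adj L φ →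
        φ 0 = α → φ (Fin.last (2 * n)) = β → φ q = γ) ∧
      g / 2 ≤ (SimpleGraph.pathGraph (2 * n + 1)).dist 0 q ∧
      g / 2 ≤ (SimpleGraph.pathGraph (2 * n + 1)).dist (Fin.last (2 * n)) q := by
  obtain ⟨⟨ℓ₁, h₁⟩, ⟨ℓ₂, h₂⟩⟩ := htriple.hasAvoidingWalks
  obtain ⟨⟨α', β', hαα', hββ', hαβ, -, -, -, hαβ', hβα'⟩, ⟨-, hαγ, hβγ⟩,
    ⟨-, P, -, Q, -, hPQ, -, hQP⟩, -⟩ := htriple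
  have hleft := (hasAvoidingWalks_oscillate hαα' hββ' hαβ hαβ' (fun h => hβα' h.symm)
    (g + 1)).append h₁
  have hQP' : HasAvoidingWalks H Q.length β α α α β := ⟨Q, Q, P, rfl, rfl, hPQ, hQP, hQP⟩
  have hright := (hasAvoidingWalks_oscillate hββ' hαα' hαβ.symm hβα' (fun h => hαβ' h.symm)
    (g + 1)).append (hQP'.append h₂)
  exact exists_switching_path hleft hright hαγ.ne hβγ.ne (hleft.even hbip hα hα)
    (hright.even hbip hβ hβ) (by omega) (by omega) (by omega) (by omega)

/-- Construction of the switching gadget: under the stated assumptions on `H`, `X`, and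
the structural triple `(α,β,γ)`, and for every `g ∈ ℕ`, there is a path `T` of even
length `2n` (here `pathGraph (2n+1)`, with input endvertex `p = 0` and output endvertex
`r = Fin.last (2n)`) with `H`-lists `L` and an internal vertex `q` at an even position
(hence in the same bipartition class of the path as `p` and `r`) such that:
(S1) `L p = L r = {α,β}` and `L q = {α,β,γ}`;
(S2) for every `a ∈ {α,β}` some list homomorphism maps both `p` and `r` to `a` and maps
`q` to a vertex other than `γ`;
(S3) some list homomorphism maps `p` to `α`, `r` to `β`, and `q` to `γ`;
(S4) every list homomorphism mapping `p` to `α` and `r` to `β` maps `q` to `γ`;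
moreover `dist(p,q) ≥ g/2` and `dist(r,q) ≥ g/2`. -/
theorem switching_gadget {W : Type} [Fintype W] (H : SimpleGraph W) (X : Set W)
    (hconn : H.Connected) (hbip : BipClass H X) (hundec : Undecomposable H X)
    (hnca : ¬ IsCircularArcGraph Hᶜ)
    (α β γ : W) (hα : α ∈ X) (hβ : β ∈ X) (hγ : γ ∈ X)
    (htriple : StructTriple H α β γ) (g : ℕ) :
    ∃ (n : ℕ) (q : Fin (2 * n + 1)) (L : Fin (2 * n + 1) → Set W),
      (q : ℕ) % 2 = 0 ∧ q ≠ 0 ∧ q ≠ Fin.last (2 * n) ∧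
      L 0 = {α, β} ∧ L (Fin.last (2 * n)) = {α, β} ∧ L q = {α, β, γ} ∧
      (∀ a ∈ ({α, β} : Set W),
        ∃ φ, ListHomRel (SimpleGraph.pathGraph (2 * n + 1)) H.Adj L φ ∧
          φ 0 = a ∧ φ (Fin.last (2 * n)) = a ∧ φ q ≠ γ) ∧
      (∃ φ, ListHomRel (SimpleGraph.pathGraph (2 * n + 1)) H.Adj L φ ∧
        φ 0 = α ∧ φ (Fin.last (2 * n)) = β ∧ φ q = γ) ∧
      (∀ φ, ListHomRel (SimpleGraph.pathGraph (2 * n + 1)) H.Adj L φ →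
        φ 0 = α → φ (Fin.last (2 * n)) = β → φ q = γ) ∧
      g / 2 ≤ (SimpleGraph.pathGraph (2 * n + 1)).dist 0 q ∧
      g / 2 ≤ (SimpleGraph.pathGraph (2 * n + 1)).dist (Fin.last (2 * n)) q :=
  switching_gadget_general H X hbip α β γ hα hβ htriple g
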